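/- Transport along Grothendieck morphisms composes correctly in the Π-type construction: for a groupoid Γ, functors A : Γ ⥤ Grpd and B : ∫A ⥤ Grpd, and a morphism p : γ → γ' in Γ, the assignment Π(p) sending a functor τ : A γ ⥤ B_γ-union to the functor σ' ↦ (B applied to (p, id)).obj (τ.obj ((A p⁻¹).obj σ')) defines a map on objects such that Π(id_γ) = id and Π(p' ∘ p) = Π(p') ∘ Π(p), using functoriality of A and B. -/

import Mathlib

/-!
Both identities are instances of the functoriality of `B` on the morphisms `(p, eqToHom _)`
of `∫A`, which compose like their base morphisms because their fiber parts are equalities.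
The only subtlety is that `Π(p)` evaluates `τ` at `(A p⁻¹) σ'`: the points `(A (𝟙 γ)⁻¹) σ` and
`(A (p ≫ p')⁻¹) σ''` agree with `σ` and `(A p⁻¹) ((A p'⁻¹) σ'')` only propositionally, and
this is absorbed by transporting along that equality inside the dependent function `τ`.
-/

open CategoryTheory

variable {Γ : Type u} [Groupoid.{u} Γ] (A : Γ ⥤ Grpd.{u, u})
  (B : Grothendieck (A ⋙ Grpd.forgetToCat) ⥤ Grpd.{u, u})

/-- Transport of the Π-type construction of the groupoid model along `p : γ ⟶ γ'`:
it sends a dependent object `τ` (assigning to each `σ : A γ` an object of `B (γ, σ)`)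
to `σ' ↦ (B.map (p, id)).obj (τ ((A p⁻¹).obj σ'))`. -/
def piTransport {γ γ' : Γ} (p : γ ⟶ γ')
    (τ : ∀ σ : A.obj γ, B.obj ⟨γ, σ⟩) :
    ∀ σ' : A.obj γ', B.obj ⟨γ', σ'⟩ :=
  fun σ' =>
    (B.map (⟨p, eqToHom (by
        calc (show A.obj γ' from ((A ⋙ Grpd.forgetToCat).map p).toFunctor.obj ((A.map (Groupoid.inv p)).obj σ'))
            = (A.map (Groupoid.inv p) ≫ A.map p).obj σ' := rfl
          _ = σ' := by rw [← A.map_comp, Groupoid.inv_comp, A.map_id]; rfl)⟩ :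
      (⟨γ, (A.map (Groupoid.inv p)).obj σ'⟩ : Grothendieck (A ⋙ Grpd.forgetToCat)) ⟶
        ⟨γ', σ'⟩)).obj
      (τ ((A.map (Groupoid.inv p)).obj σ'))

namespace CategoryTheory.Grothendieck

variable {C : Type*} [Category* C] {F : C ⥤ Cat}

def homOfEq {c d : C} (p : c ⟶ d) {a : F.obj c} {b : F.obj d}
    (h : (F.map p).toFunctor.obj a = b) : (⟨c, a⟩ : Grothendieck F) ⟶ ⟨d, b⟩ :=
  ⟨p, eqToHom h⟩

lemma homOfEq_id {c : C} {a : F.obj c} (h : (F.map (𝟙 c)).toFunctor.obj a = a) :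
    homOfEq (𝟙 c) h = 𝟙 _ :=
  Grothendieck.ext _ _ rfl (by simp only [homOfEq, id_fiber]; erw [eqToHom_trans])

lemma homOfEq_comp {c d e : C} {a : F.obj c} {b : F.obj d} {x : F.obj e} (p : c ⟶ d)
    (q : d ⟶ e) (h : (F.map p).toFunctor.obj a = b) (h' : (F.map q).toFunctor.obj b = x) :
    homOfEq p h ≫ homOfEq q h' = homOfEq (p ≫ q) (by simp [h, h']) :=
  Grothendieck.ext _ _ rfl <| by
    simp only [homOfEq, comp_fiber, eqToHom_map]
    erw [eqToHom_trans, eqToHom_trans, eqToHom_trans]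

lemma map_homOfEq_obj_congr (B : Grothendieck F ⥤ Grpd) {c d : C} (p : c ⟶ d)
    {a a' : F.obj c} (ha : a = a') {b : F.obj d} (h : (F.map p).toFunctor.obj a = b)
    (τ : ∀ a : F.obj c, B.obj ⟨c, a⟩) :
    (B.map (homOfEq p h)).obj (τ a) = (B.map (homOfEq p (ha ▸ h))).obj (τ a') := by
  subst ha; rfl

end CategoryTheory.Grothendieck

open Grothendieck

lemma map_obj_map_inv_obj {γ γ' : Γ} (p : γ ⟶ γ') (σ' : A.obj γ') :
    (A.map p).obj ((A.map (Groupoid.inv p)).obj σ') = σ' := by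
  rw [← Functor.comp_obj, ← Grpd.comp_eq_comp, ← A.map_comp, Groupoid.inv_comp, A.map_id]
  rfl

/-- Transport in the Π-type construction is functorial on objects:
`Π(id_γ) = id` and `Π(p' ∘ p) = Π(p') ∘ Π(p)`. -/
theorem stmt_16 :
    (∀ (γ : Γ) (τ : ∀ σ : A.obj γ, B.obj ⟨γ, σ⟩), piTransport A B (𝟙 γ) τ = τ) ∧
    (∀ (γ γ' γ'' : Γ) (p : γ ⟶ γ') (p' : γ' ⟶ γ'')
      (τ : ∀ σ : A.obj γ, B.obj ⟨γ, σ⟩),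
      piTransport A B (p ≫ p') τ = piTransport A B p' (piTransport A B p τ)) := by
  refine ⟨fun γ τ => funext fun σ => ?_, fun γ γ' γ'' p p' τ => funext fun σ => ?_⟩
  · have hσ : (A.map (Groupoid.inv (𝟙 γ))).obj σ = σ := by simp [Grpd.id_eq_id]
    calc piTransport A B (𝟙 γ) τ σ = (B.map (homOfEq (𝟙 γ) _)).obj (τ σ) :=
          map_homOfEq_obj_congr B _ hσ _ τ
      _ = (B.map (𝟙 _)).obj (τ σ) := congrArg (fun f => (B.map f).obj (τ σ)) (homOfEq_id _)
      _ = τ σ := by rw [B.map_id]; rfl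
  · have hσ : (A.map (Groupoid.inv (p ≫ p'))).obj σ =
        (A.map (Groupoid.inv p)).obj ((A.map (Groupoid.inv p')).obj σ) := by
      simp [Grpd.comp_eq_comp]
    calc piTransport A B (p ≫ p') τ σ = (B.map (homOfEq (p ≫ p') _)).obj (τ _) :=
          map_homOfEq_obj_congr B _ hσ _ τ
      _ = (B.map (homOfEq p (map_obj_map_inv_obj A p _) ≫
            homOfEq p' (map_obj_map_inv_obj A p' σ))).obj (τ _) :=
          congrArg (fun f => (B.map f).obj (τ _)) (homOfEq_comp _ _ _ _).symm
      _ = piTransport A B p' (piTransport A B p τ) σ := by rw [B.map_comp]; rfl
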